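/- arXiv:2410.08088 — 9 statements merged into one kernel-verified Lean document; each statement's English description precedes it below -/
import Mathlib

section
/- Let $a > -1$, $A, T > 0$, and suppose $(f_n)_{n\ge 1}$ satisfies $|f_n| \le AT^n$ for all $n$. Define $\phi_n$ recursively by $\phi_0 = 0$, $\phi_n = f_n - (n-1+a)\phi_{n-1}$. Then $\frac{(-1)^n \phi_n}{\Gamma(n+a)}$ converges as $n \to \infty$ to $S_\infty := \sum_{j=1}^{\infty} \frac{(-1)^j f_j}{\Gamma(j+a)}$. -/
/-!
Since `s / Γ(s + 1) = 1 / Γ(s)` (also at the poles, with `1 / Γ = 0` there), the recursion makes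
`(-1)ⁿ φₙ / Γ(n + a)` the `n`-th partial sum of the series `S∞`. Its terms are eventually bounded by
`A Tʲ / Γ(j + a)`, and `Γ(j + 1 + a) = (j + a) Γ(j + a)` lets the ratio test sum these bounds.
-/

open Filter Finset

theorem Complex.inv_ofReal_Gamma_eq_mul_inv_ofReal_Gamma_add_one (s : ℝ) :
    ((Real.Gamma s : ℂ))⁻¹ = s * ((Real.Gamma (s + 1) : ℂ))⁻¹ := by
  simpa only [← Complex.Gamma_ofReal, Complex.ofReal_add, Complex.ofReal_one] using
    Complex.one_div_Gamma_eq_self_mul_one_div_Gamma_add_one s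

theorem norm_pow_div_Gamma_add_succ (x : ℝ) {b : ℝ} (n : ℕ) (hb : 0 < n + b) :
    ‖x ^ (n + 1) / Real.Gamma ((n + 1 : ℕ) + b)‖ = |x| / (n + b) * ‖x ^ n / Real.Gamma (n + b)‖ := by
  rw [show ((n + 1 : ℕ) : ℝ) + b = (n + b) + 1 by push_cast; ring,
    Real.Gamma_add_one hb.ne']
  simp only [norm_div, norm_mul, norm_pow, Real.norm_eq_abs, abs_of_pos hb]
  have hΓ : |Real.Gamma (n + b)| ≠ 0 := abs_ne_zero.2 (Real.Gamma_pos_of_pos hb).ne'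
  field_simp
  ring

theorem summable_pow_div_Gamma_add (x b : ℝ) :
    Summable fun n : ℕ => x ^ n / Real.Gamma (n + b) := by
  refine summable_of_ratio_norm_eventually_le (r := 1 / 2) (by norm_num) ?_
  filter_upwards [tendsto_natCast_atTop_atTop.eventually_ge_atTop (2 * |x| + 1 - b)] with n hn
  have hb : (0 : ℝ) < n + b := by linarith [abs_nonneg x]
  have hx : |x| / (n + b) ≤ 1 / 2 := by
    rw [div_le_iff₀ hb]
    linarith
  rw [norm_pow_div_Gamma_add_succ x n hb]
  exact mul_le_mul_of_nonneg_right hx (norm_nonneg _)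

theorem summable_neg_one_pow_mul_div_Gamma_of_norm_le (a : ℝ) {A T : ℝ} {f : ℕ → ℂ}
    (hf : ∀ n : ℕ, 1 ≤ n → ‖f n‖ ≤ A * T ^ n) :
    Summable fun j : ℕ => (-1) ^ (j + 1) * f (j + 1) / (Real.Gamma ((j + 1 : ℕ) + a) : ℂ) := by
  refine .of_norm_bounded_eventually_nat ((summable_pow_div_Gamma_add T (1 + a)).mul_left (A * T)) ?_
  filter_upwards [tendsto_natCast_atTop_atTop.eventually_ge_atTop (-a)] with j hj
  have hΓ : 0 < Real.Gamma ((j + 1 : ℕ) + a) := Real.Gamma_pos_of_pos (by push_cast; linarith)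
  calc ‖(-1) ^ (j + 1) * f (j + 1) / (Real.Gamma ((j + 1 : ℕ) + a) : ℂ)‖
      = ‖f (j + 1)‖ / Real.Gamma ((j + 1 : ℕ) + a) := by
        push_cast at hΓ ⊢
        simp [Complex.norm_real, abs_of_pos hΓ]
    _ ≤ A * T ^ (j + 1) / Real.Gamma ((j + 1 : ℕ) + a) := by
        gcongr
        exact hf (j + 1) j.succ_pos
    _ = A * T * (T ^ j / Real.Gamma (j + (1 + a))) := by
        push_cast
        ring_nf

theorem sum_range_neg_one_pow_mul_div_Gamma (a : ℝ) {f φ : ℕ → ℂ} (hφ0 : φ 0 = 0)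
    (hφ : ∀ n : ℕ, 1 ≤ n → φ n = f n - ((n : ℂ) - 1 + a) * φ (n - 1)) (n : ℕ) :
    ∑ j ∈ range n, (-1) ^ (j + 1) * f (j + 1) / (Real.Gamma ((j + 1 : ℕ) + a) : ℂ) =
      (-1) ^ n * φ n / (Real.Gamma (n + a) : ℂ) := by
  refine Finset.sum_range_induction _ (fun n => (-1) ^ n * φ n / (Real.Gamma (n + a) : ℂ)) ?_ n
    fun j _ => ?_
  · simp [hφ0]
  have hΓ := Complex.inv_ofReal_Gamma_eq_mul_inv_ofReal_Gamma_add_one (j + a)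
  rw [hφ (j + 1) j.succ_pos, Nat.add_sub_cancel, show ((j + 1 : ℕ) : ℝ) + a = j + a + 1 by
    push_cast; ring]
  simp only [div_eq_mul_inv, hΓ]
  push_cast
  ring

theorem stmt_2_general (a A T : ℝ)
    (f : ℕ → ℂ) (hf : ∀ n : ℕ, 1 ≤ n → ‖f n‖ ≤ A * T ^ n)
    (φ : ℕ → ℂ) (hφ0 : φ 0 = 0)
    (hφ : ∀ n : ℕ, 1 ≤ n → φ n = f n - ((n : ℂ) - 1 + a) * φ (n - 1)) :
    Filter.Tendsto (fun n : ℕ => (-1) ^ n * φ n / (Real.Gamma (n + a) : ℂ))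
      Filter.atTop
      (nhds (∑' j : ℕ, (-1) ^ (j + 1) * f (j + 1) / (Real.Gamma ((j + 1 : ℕ) + a) : ℂ))) := by
  simpa only [sum_range_neg_one_pow_mul_div_Gamma a hφ0 hφ] using
    (summable_neg_one_pow_mul_div_Gamma_of_norm_le a hf).hasSum.tendsto_sum_nat

theorem stmt_2 (a A T : ℝ) (ha : a > -1) (hA : A > 0) (hT : T > 0)
    (f : ℕ → ℂ) (hf : ∀ n : ℕ, 1 ≤ n → ‖f n‖ ≤ A * T ^ n)
    (φ : ℕ → ℂ) (hφ0 : φ 0 = 0)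
    (hφ : ∀ n : ℕ, 1 ≤ n → φ n = f n - ((n : ℂ) - 1 + a) * φ (n - 1)) :
    Filter.Tendsto (fun n : ℕ => (-1) ^ n * φ n / (Real.Gamma (n + a) : ℂ))
      Filter.atTop
      (nhds (∑' j : ℕ, (-1) ^ (j + 1) * f (j + 1) / (Real.Gamma ((j + 1 : ℕ) + a) : ℂ))) :=
  stmt_2_general a A T f hf φ hφ0 hφ
end

section
/- Let $a_M \ge 2$, $T > 0$, $C > 0$. Let $(p_n)_{n\ge 2}$ be a sequence with $|p_n| \le C$ for all $n \ge 2$, and $(q_n)_{n \ge 0}$ with $|q_n| \le T^n$. Then $\sum_{k=2}^{n-1} \frac{\Gamma(k+a_M)\, p_k}{\Gamma(n+a_M)}\, q_{n-k} \to 0$ as $n \to \infty$. -/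
open Finset Filter Real
open scoped Nat Topology

/-!
Write `n = m + 1`. Since `Γ(m + 1 + a) = (m + a) Γ(m + a)` and each factor `j + a` of
`Γ(m + a) / Γ(k + a)` dominates `j - k + 1`, the Gamma ratio in the `k`-th term is at most
`1 / ((m - k)! (m + a))`. Hence the sum is bounded by `C T / (m + a)` times a partial sum of
the exponential series for `T`, i.e. by `C T eᵀ / (m + a) → 0`.
-/

theorem Gamma_natCast_succ_add {x : ℝ} (hx : 0 < x) (m : ℕ) :
    Gamma ((m + 1 : ℕ) + x) = (m + x) * Gamma (m + x) := by
  rw [Nat.cast_succ, add_right_comm, Gamma_add_one (by positivity)]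

theorem factorial_sub_mul_Gamma_le {x : ℝ} (hx : 1 ≤ x) {k m : ℕ} (hkm : k ≤ m) :
    ((m - k)! : ℝ) * Gamma (k + x) ≤ Gamma (m + x) := by
  induction m, hkm using Nat.le_induction with
  | base => simp
  | succ m hkm ih =>
    have hfac : ((m + 1 - k)! : ℝ) = ((m - k : ℕ) + 1) * (m - k)! := by
      rw [Nat.succ_sub hkm, Nat.factorial_succ]; push_cast; ring
    have hle : ((m - k : ℕ) : ℝ) + 1 ≤ m + x := by
      have : ((m - k : ℕ) : ℝ) ≤ m := by exact_mod_cast Nat.sub_le m k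
      linarith
    rw [Gamma_natCast_succ_add (by positivity), hfac, mul_assoc]
    exact mul_le_mul hle ih (by positivity) (by positivity)

theorem Gamma_div_Gamma_succ_le {x : ℝ} (hx : 1 ≤ x) {k m : ℕ} (hkm : k ≤ m) :
    Gamma (k + x) / Gamma ((m + 1 : ℕ) + x) ≤ ((m - k)! * (m + x))⁻¹ := by
  calc Gamma (k + x) / Gamma ((m + 1 : ℕ) + x) = Gamma (k + x) / ((m + x) * Gamma (m + x)) := by
        rw [Gamma_natCast_succ_add (by positivity)]
    _ ≤ Gamma (k + x) / ((m + x) * ((m - k)! * Gamma (k + x))) := by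
        gcongr
        exact factorial_sub_mul_Gamma_le hx hkm
    _ = ((m - k)! * (m + x))⁻¹ := by
        field_simp

theorem sum_Icc_pow_div_factorial_sub_le_exp {T : ℝ} (hT : 0 ≤ T) (k₀ m : ℕ) :
    ∑ k ∈ Icc k₀ m, T ^ (m - k) / (m - k)! ≤ exp T :=
  calc ∑ k ∈ Icc k₀ m, T ^ (m - k) / (m - k)!
      ≤ ∑ k ∈ range (m + 1), T ^ (m - k) / (m - k)! := by
        refine sum_le_sum_of_subset_of_nonneg (fun k hk => ?_) fun _ _ _ => by positivity
        simp only [mem_Icc, mem_range] at hk ⊢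
        omega
    _ = ∑ j ∈ range (m + 1), T ^ j / j ! := sum_range_reflect (fun j => T ^ j / j !) (m + 1)
    _ ≤ exp T := sum_le_exp_of_nonneg hT (m + 1)

theorem norm_sum_Gamma_convolution_le {x T C : ℝ} (hx : 1 ≤ x) (hT : 0 ≤ T) (hC : 0 ≤ C)
    {p q : ℕ → ℂ} {k₀ : ℕ} (hp : ∀ n : ℕ, k₀ ≤ n → ‖p n‖ ≤ C)
    (hq : ∀ n : ℕ, ‖q n‖ ≤ T ^ n) (m : ℕ) :
    ‖∑ k ∈ Icc k₀ m,
        (Gamma (k + x) : ℂ) * p k / (Gamma ((m + 1 : ℕ) + x) : ℂ) * q (m + 1 - k)‖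
      ≤ C * T * exp T / (m + x) := by
  have hterm : ∀ k ∈ Icc k₀ m,
      ‖(Gamma (k + x) : ℂ) * p k / (Gamma ((m + 1 : ℕ) + x) : ℂ) * q (m + 1 - k)‖
        ≤ C * T / (m + x) * (T ^ (m - k) / (m - k)!) := by
    intro k hk
    obtain ⟨hk₀, hkm⟩ := mem_Icc.mp hk
    calc _ = Gamma (k + x) / Gamma ((m + 1 : ℕ) + x) * (‖p k‖ * ‖q (m + 1 - k)‖) := by
          rw [norm_mul, norm_div, norm_mul, Complex.norm_real, Complex.norm_real,
            norm_of_nonneg (Gamma_pos_of_pos (by positivity)).le,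
            norm_of_nonneg (Gamma_pos_of_pos (by positivity)).le]
          ring
      _ ≤ ((m - k)! * (m + x))⁻¹ * (C * T ^ (m + 1 - k)) := by
        gcongr
        · exact Gamma_div_Gamma_succ_le hx hkm
        · exact hp k hk₀
        · exact hq _
      _ = C * T / (m + x) * (T ^ (m - k) / (m - k)!) := by
        rw [Nat.sub_add_comm hkm, pow_succ]
        field_simp
  calc _ ≤ ∑ k ∈ Icc k₀ m, C * T / (m + x) * (T ^ (m - k) / (m - k)!) :=
        (norm_sum_le _ _).trans (sum_le_sum hterm)
    _ = C * T / (m + x) * ∑ k ∈ Icc k₀ m, T ^ (m - k) / (m - k)! := (mul_sum ..).symm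
    _ ≤ C * T / (m + x) * exp T := by
        gcongr
        exact sum_Icc_pow_div_factorial_sub_le_exp hT k₀ m
    _ = C * T * exp T / (m + x) := by ring

theorem stmt_3 (aM T C : ℝ) (haM : aM ≥ 2) (hT : T > 0) (hC : C > 0)
    (p q : ℕ → ℂ)
    (hp : ∀ n : ℕ, 2 ≤ n → ‖p n‖ ≤ C)
    (hq : ∀ n : ℕ, ‖q n‖ ≤ T ^ n) :
    Filter.Tendsto
      (fun n : ℕ => ∑ k ∈ Finset.Icc 2 (n - 1),
        (Real.Gamma (k + aM) : ℂ) * p k / (Real.Gamma (n + aM) : ℂ) * q (n - k))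
      Filter.atTop (nhds 0) := by
  rw [← tendsto_add_atTop_iff_nat 1, tendsto_zero_iff_norm_tendsto_zero]
  have hbound : Tendsto (fun m : ℕ => C * T * exp T / (m + aM)) atTop (𝓝 0) :=
    tendsto_const_nhds.div_atTop (tendsto_natCast_atTop_atTop.atTop_add tendsto_const_nhds)
  refine squeeze_zero (fun _ => norm_nonneg _) (fun m => ?_) hbound
  simpa only [Nat.add_sub_cancel] using
    norm_sum_Gamma_convolution_le (by linarith) hT.le hC.le hp hq m
end

section
/- Let $a_M \ge 2$, and suppose $(\tilde\phi_n)_{n\ge 2}$ satisfies $\frac{(-1)^n \tilde\phi_n}{\Gamma(n+a_M)} \to S_\infty$ for some real $S_\infty$. Let $(q_n)_{n\ge 0}$ satisfy $q_0 = 1$ and $|q_n| \le T^n$ for some $T > 0$. Define $\tilde\phi^q_n = \tilde\phi_n + \sum_{k=2}^{n-1}\tilde\phi_k q_{n-k}$ for $n \ge 2$. Then $\frac{(-1)^n \tilde\phi^q_n}{\Gamma(n+a_M)} \to S_\infty$ as $n \to \infty$. -/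
open Filter Finset

lemma aux_v_tendsto (aM T : ℝ) (haM : aM ≥ 2) (hT : T > 0) :
    Tendsto (fun n : ℕ => (∑ k ∈ Finset.Icc 2 (n - 1),
        Real.Gamma (k + aM) * T ^ (n - k)) / Real.Gamma (n + aM))
      atTop (nhds 0) := by
  set u : ℕ → ℝ := fun n => ∑ k ∈ Finset.Icc 2 (n - 1), Real.Gamma (k + aM) * T ^ (n - k) with hu
  set v : ℕ → ℝ := fun n => u n / Real.Gamma (n + aM) with hv
  have hΓpos : ∀ n : ℕ, 0 < Real.Gamma (n + aM) := by
    intro n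
    apply Real.Gamma_pos_of_pos
    have : (0:ℝ) ≤ n := Nat.cast_nonneg n
    linarith
  have hden : ∀ n : ℕ, (0:ℝ) < n + aM := by
    intro n
    have : (0:ℝ) ≤ n := Nat.cast_nonneg n
    linarith
  have hv_nonneg : ∀ n, 0 ≤ v n := by
    intro n
    apply div_nonneg _ (hΓpos n).le
    apply Finset.sum_nonneg
    intro k hk
    exact mul_nonneg (Real.Gamma_pos_of_pos (by have : (0:ℝ) ≤ k := Nat.cast_nonneg k; linarith)).le
      (pow_nonneg hT.le _)
  have hrec : ∀ n : ℕ, (2:ℕ) ≤ n → v (n + 1) = T * (v n + 1) / (n + aM) := by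
    intro n hn
    have hun : u (n + 1) = T * u n + Real.Gamma (n + aM) * T := by
      have h1 : n - 1 + 1 = n := by omega
      have hset : Finset.Icc 2 n = insert n (Finset.Icc 2 (n - 1)) := by
        ext k; simp only [Finset.mem_Icc, Finset.mem_insert]; omega
      have hnotmem : n ∉ Finset.Icc 2 (n - 1) := by
        simp only [Finset.mem_Icc]; omega
      have : u (n+1) = ∑ k ∈ Finset.Icc 2 n, Real.Gamma (k + aM) * T ^ (n + 1 - k) := by
        simp [hu]
      rw [this, hset, Finset.sum_insert hnotmem]
      have h2 : n + 1 - n = 1 := by omega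
      rw [h2, pow_one]
      rw [Finset.mul_sum]
      have hsum : ∀ k ∈ Finset.Icc 2 (n - 1),
          Real.Gamma (k + aM) * T ^ (n + 1 - k) = T * (Real.Gamma (k + aM) * T ^ (n - k)) := by
        intro k hk
        simp only [Finset.mem_Icc] at hk
        have : n + 1 - k = (n - k) + 1 := by omega
        rw [this, pow_succ]
        ring
      rw [Finset.sum_congr rfl hsum]
      ring
    have hΓs : Real.Gamma ((n+1 : ℕ) + aM) = (n + aM) * Real.Gamma (n + aM) := by
      push_cast
      rw [show (n : ℝ) + 1 + aM = ((n:ℝ) + aM) + 1 by ring]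
      exact Real.Gamma_add_one (hden n).ne'
    simp only [hv, hun, hΓs]
    field_simp
  -- choose N
  obtain ⟨N0, hN0⟩ := exists_nat_ge (2 * T)
  set N : ℕ := max 2 N0 with hN
  have hN2 : 2 ≤ N := le_max_left _ _
  have hNT : ∀ n : ℕ, N ≤ n → 2 * T ≤ (n : ℝ) + aM := by
    intro n hn
    have : (N0 : ℝ) ≤ n := by
      exact_mod_cast le_trans (le_max_right 2 N0) hn
    linarith
  set B : ℝ := max (v N) 1 with hB
  have hB1 : (1:ℝ) ≤ B := le_max_right _ _
  have hbdd : ∀ n : ℕ, N ≤ n → v n ≤ B := by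
    intro n hn
    induction n, hn using Nat.le_induction with
    | base => exact le_max_left _ _
    | succ n hn ih =>
      rw [hrec n (le_trans hN2 hn)]
      have hd := hNT n hn
      have h2T : (0:ℝ) < 2 * T := by linarith
      calc T * (v n + 1) / (n + aM) ≤ T * (B + 1) / (2 * T) := by
            apply div_le_div₀ (by positivity) _ h2T hd
            have := ih
            nlinarith
        _ = (B + 1) / 2 := by field_simp
        _ ≤ B := by linarith
  have hfinal : ∀ n : ℕ, N ≤ n → v (n + 1) ≤ T * (B + 1) / (n + aM) := by
    intro n hn
    rw [hrec n (le_trans hN2 hn)]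
    have hvB := hbdd n hn
    gcongr
  rw [← tendsto_add_atTop_iff_nat 1]
  apply squeeze_zero' (Filter.Eventually.of_forall fun n => hv_nonneg (n + 1))
    (Filter.eventually_atTop.2 ⟨N, hfinal⟩)
  have hlim : Tendsto (fun n : ℕ => (n : ℝ) + aM) atTop atTop :=
    Filter.tendsto_atTop_add_const_right _ aM tendsto_natCast_atTop_atTop
  exact Tendsto.div_atTop tendsto_const_nhds hlim

theorem stmt_4 (aM T S : ℝ) (haM : aM ≥ 2) (hT : T > 0)
    (φt : ℕ → ℝ)
    (hφt : Filter.Tendsto (fun n : ℕ => (-1) ^ n * φt n / Real.Gamma (n + aM))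
      Filter.atTop (nhds S))
    (q : ℕ → ℝ) (hq0 : q 0 = 1) (hq : ∀ n : ℕ, |q n| ≤ T ^ n)
    (φq : ℕ → ℝ)
    (hφq : ∀ n : ℕ, 2 ≤ n →
      φq n = φt n + ∑ k ∈ Finset.Icc 2 (n - 1), φt k * q (n - k)) :
    Filter.Tendsto (fun n : ℕ => (-1) ^ n * φq n / Real.Gamma (n + aM))
      Filter.atTop (nhds S) := by
  have hΓpos : ∀ n : ℕ, 0 < Real.Gamma (n + aM) := by
    intro n
    apply Real.Gamma_pos_of_pos
    have : (0:ℝ) ≤ n := Nat.cast_nonneg n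
    linarith
  -- bound on φt
  obtain ⟨C, hC⟩ : ∃ C : ℝ, ∀ n : ℕ, |φt n| ≤ C * Real.Gamma (n + aM) := by
    obtain ⟨C, hC⟩ := (hφt.abs).bddAbove_range.exists_ge 0
    refine ⟨C, fun n => ?_⟩
    have h1 := hC.2 _ ⟨n, rfl⟩
    have h2 : |(-1:ℝ) ^ n * φt n / Real.Gamma (n + aM)| = |φt n| / Real.Gamma (n + aM) := by
      rw [abs_div, abs_mul, abs_pow, abs_neg, abs_one, one_pow, one_mul,
        abs_of_pos (hΓpos n)]
    change |(-1:ℝ) ^ n * φt n / Real.Gamma (n + aM)| ≤ C at h1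
    rw [h2, div_le_iff₀ (hΓpos n)] at h1
    exact h1
  have hC0 : 0 ≤ C := by
    have := hC 0
    nlinarith [abs_nonneg (φt 0), hΓpos 0]
  -- the correction term tends to 0
  have hcorr : Filter.Tendsto (fun n : ℕ =>
      (-1:ℝ) ^ n * (∑ k ∈ Finset.Icc 2 (n - 1), φt k * q (n - k)) / Real.Gamma (n + aM))
      Filter.atTop (nhds 0) := by
    have hkey := (aux_v_tendsto aM T haM hT).const_mul C
    rw [mul_zero] at hkey
    apply squeeze_zero_norm _ hkey
    intro n
    have hb : ‖(-1:ℝ) ^ n * (∑ k ∈ Finset.Icc 2 (n - 1), φt k * q (n - k)) /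
        Real.Gamma (n + aM)‖ =
        |∑ k ∈ Finset.Icc 2 (n - 1), φt k * q (n - k)| / Real.Gamma (n + aM) := by
      rw [Real.norm_eq_abs, abs_div, abs_mul, abs_pow, abs_neg, abs_one, one_pow, one_mul,
        abs_of_pos (hΓpos n)]
    rw [hb, mul_comm C, div_mul_eq_mul_div]
    apply div_le_div_of_nonneg_right _ (hΓpos n).le |>.trans_eq rfl
    calc |∑ k ∈ Finset.Icc 2 (n - 1), φt k * q (n - k)|
        ≤ ∑ k ∈ Finset.Icc 2 (n - 1), |φt k * q (n - k)| := Finset.abs_sum_le_sum_abs _ _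
      _ ≤ ∑ k ∈ Finset.Icc 2 (n - 1), C * Real.Gamma (k + aM) * T ^ (n - k) := by
          apply Finset.sum_le_sum
          intro k hk
          rw [abs_mul]
          have h1 := hC k
          have h2 := hq (n - k)
          have hΓk : 0 < Real.Gamma (k + aM) := by
            apply Real.Gamma_pos_of_pos
            have : (0:ℝ) ≤ k := Nat.cast_nonneg k
            linarith
          have : (0:ℝ) ≤ T ^ (n - k) := pow_nonneg hT.le _
          nlinarith [abs_nonneg (φt k), abs_nonneg (q (n - k))]
      _ = (∑ k ∈ Finset.Icc 2 (n - 1), Real.Gamma (k + aM) * T ^ (n - k)) * C := by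
          rw [Finset.sum_mul]
          apply Finset.sum_congr rfl
          intro k _
          ring
  -- combine
  have heq : ∀ᶠ n : ℕ in Filter.atTop,
      (-1:ℝ) ^ n * φt n / Real.Gamma (n + aM) +
        (-1:ℝ) ^ n * (∑ k ∈ Finset.Icc 2 (n - 1), φt k * q (n - k)) / Real.Gamma (n + aM) =
      (-1:ℝ) ^ n * φq n / Real.Gamma (n + aM) := by
    filter_upwards [Filter.eventually_ge_atTop 2] with n hn
    rw [hφq n hn]
    ring
  have := hφt.add hcorr
  rw [add_zero] at this
  exact this.congr' heq
end

section
/- Let $w \in \mathbb{C}$ with $|1+w| < 1$ and $\mathrm{Re}(w) \ge -1$ (i.e., writing $w = -1 + re^{i\theta}$ with $0 < r < 1$ and $\theta \in (-\pi/2, \pi/2)$). Then for all $t \in (0,1)$: $|1 + w(1-t)| \ge \frac{1}{\sqrt{5}}\,(|1+w| + t)$. -/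
/-!
Write `1 + w (1 - t) = t + z` with `z = (1 - t)(1 + w)`. Since `Re z ≥ 0`, the two terms meet at
an angle of at most `π/2`, so `‖t + z‖² ≥ t² + ‖z‖²`, and Cauchy–Schwarz against `(1, 2)` gives
`‖z‖ + 2t ≤ √5 ‖t + z‖`. Finally `‖1 + w‖ ≤ 1` gives `‖1 + w‖ + t ≤ ‖z‖ + 2t`.
-/

open Complex

lemma Complex.sq_add_sq_norm_le_sq_norm_ofReal_add {s : ℝ} (hs : 0 ≤ s) {z : ℂ} (hz : 0 ≤ z.re) :
    s ^ 2 + ‖z‖ ^ 2 ≤ ‖(s : ℂ) + z‖ ^ 2 := by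
  have hexpand : ‖(s : ℂ) + z‖ ^ 2 = s ^ 2 + 2 * s * z.re + ‖z‖ ^ 2 := by
    simp only [Complex.sq_norm, normSq_apply, add_re, add_im, ofReal_re, ofReal_im]
    ring
  nlinarith [mul_nonneg hs hz]

lemma Real.add_two_mul_le_sqrt_five_mul_sqrt (a b : ℝ) :
    a + 2 * b ≤ √5 * √(a ^ 2 + b ^ 2) := by
  rw [← Real.sqrt_mul (by norm_num)]
  exact Real.le_sqrt_of_sq_le (by nlinarith [sq_nonneg (2 * a - b)])

lemma Complex.norm_add_two_mul_div_sqrt_five_le {s : ℝ} (hs : 0 ≤ s) {z : ℂ} (hz : 0 ≤ z.re) :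
    (‖z‖ + 2 * s) / √5 ≤ ‖(s : ℂ) + z‖ := by
  rw [div_le_iff₀' (by positivity)]
  calc ‖z‖ + 2 * s ≤ √5 * √(‖z‖ ^ 2 + s ^ 2) := Real.add_two_mul_le_sqrt_five_mul_sqrt _ _
    _ ≤ √5 * ‖(s : ℂ) + z‖ := by
      gcongr
      rw [Real.sqrt_le_left (norm_nonneg _), add_comm]
      exact sq_add_sq_norm_le_sq_norm_ofReal_add hs hz

theorem stmt_7 (w : ℂ) (h1 : ‖1 + w‖ < 1) (h2 : w.re ≥ -1) :
    ∀ t : ℝ, t ∈ Set.Ioo (0 : ℝ) 1 →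
      ‖1 + w * (1 - (t : ℂ))‖ ≥
        (‖1 + w‖ + t) / Real.sqrt 5 := by
  rintro t ⟨ht0, ht1⟩
  set z : ℂ := ((1 - t : ℝ) : ℂ) * (1 + w)
  have hz : 0 ≤ z.re := by
    rw [re_ofReal_mul, add_re, one_re]
    nlinarith
  have hnorm : ‖z‖ = (1 - t) * ‖1 + w‖ := by
    rw [norm_mul, norm_real, Real.norm_of_nonneg (by linarith)]
  have hsplit : 1 + w * (1 - (t : ℂ)) = (t : ℂ) + z := by
    push_cast [z]
    ring
  calc (‖1 + w‖ + t) / √5 ≤ (‖z‖ + 2 * t) / √5 := by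
        gcongr ?_ / _
        rw [hnorm]
        nlinarith
    _ ≤ ‖(t : ℂ) + z‖ := norm_add_two_mul_div_sqrt_five_le ht0.le hz
    _ = ‖1 + w * (1 - (t : ℂ))‖ := by rw [hsplit]
end

section
/- Let $b > -2$ and set $\Gamma_n := \Gamma(n+b)$ for $n \ge 2$. Then there exists $\bar C = \bar C(b) > 0$ such that for all $n \ge 4$: $\sum_{k=2}^{n-2} \Gamma_k \Gamma_{n-k} \le \bar C\, \Gamma_{n-2}$. -/
set_option maxHeartbeats 1000000

/-- Monotonicity: for `2 ≤ j ≤ k` with `2k ≤ n`, the product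
`Γ(k+b)Γ(n-k+b)` is at most `Γ(j+b)Γ(n-j+b)`. -/
private lemma gamma_prod_mono (b : ℝ) (hb : -2 < b) (n j : ℕ) (hj : 2 ≤ j) :
    ∀ k : ℕ, j ≤ k → 2 * k ≤ n →
      Real.Gamma (k + b) * Real.Gamma ((n - k : ℕ) + b) ≤
      Real.Gamma (j + b) * Real.Gamma ((n - j : ℕ) + b) := by
  intro k
  induction k with
  | zero => intro h _; omega
  | succ m ih =>
    intro hjk hkn
    rcases eq_or_lt_of_le hjk with h | h
    · rw [h]
    · have hm2 : 2 ≤ m := by omega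
      have hmn : m + 1 ≤ n := by omega
      have hrec : 2 * m + 1 ≤ n := by omega
      have c1 : ((n - (m+1) : ℕ) : ℝ) = (n:ℝ) - (m:ℝ) - 1 := by
        rw [Nat.cast_sub hmn]; push_cast; ring
      have c2 : ((n - m : ℕ) : ℝ) = (n:ℝ) - (m:ℝ) := by
        rw [Nat.cast_sub (by omega)]
      have hm2' : (2:ℝ) ≤ (m:ℝ) := by exact_mod_cast hm2
      have hrec' : (2*(m:ℝ)+1 : ℝ) ≤ (n:ℝ) := by exact_mod_cast hrec
      have hA : (0:ℝ) < (m:ℝ) + b := by linarith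
      have hB : (0:ℝ) < (n:ℝ) - (m:ℝ) - 1 + b := by linarith
      have hAB : (m:ℝ) + b ≤ (n:ℝ) - (m:ℝ) - 1 + b := by linarith
      have g1 : Real.Gamma ((↑(m+1):ℝ) + b) = ((m:ℝ)+b) * Real.Gamma ((m:ℝ)+b) := by
        push_cast
        rw [show (m:ℝ)+1+b = ((m:ℝ)+b)+1 by ring, Real.Gamma_add_one (ne_of_gt hA)]
      have g2 : Real.Gamma (((n-m:ℕ):ℝ) + b)
          = ((n:ℝ)-(m:ℝ)-1+b) * Real.Gamma ((n:ℝ)-(m:ℝ)-1+b) := by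
        rw [c2, show (n:ℝ)-(m:ℝ)+b = ((n:ℝ)-(m:ℝ)-1+b)+1 by ring,
          Real.Gamma_add_one (ne_of_gt hB)]
      have G1 : 0 < Real.Gamma ((m:ℝ)+b) := Real.Gamma_pos_of_pos hA
      have G2 : 0 < Real.Gamma ((n:ℝ)-(m:ℝ)-1+b) := Real.Gamma_pos_of_pos hB
      have key : Real.Gamma ((↑(m+1):ℝ) + b) * Real.Gamma ((↑(n - (m+1)) : ℝ) + b) ≤
                 Real.Gamma ((m:ℝ) + b) * Real.Gamma ((↑(n - m):ℝ) + b) := by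
        rw [g1, g2, c1]
        have h' := mul_le_mul_of_nonneg_right hAB
          (le_of_lt (mul_pos G1 G2))
        nlinarith [h']
      exact key.trans (ih (by omega) (by omega))

theorem stmt_15 (b : ℝ) (hb : b > -2) :
    ∃ C : ℝ, C > 0 ∧ ∀ n : ℕ, 4 ≤ n →
      ∑ k ∈ Finset.Icc 2 (n - 2), Real.Gamma (k + b) * Real.Gamma ((n - k : ℕ) + b) ≤
        C * Real.Gamma ((n - 2 : ℕ) + b) := by
  have hb' : -2 < b := hb
  have h2b : (0:ℝ) < 2 + b := by linarith
  have h3b : (0:ℝ) < 3 + b := by linarith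
  have hΓ2 : 0 < Real.Gamma (2 + b) := Real.Gamma_pos_of_pos h2b
  refine ⟨(4 + 2*(2+b)*(3+b)) * Real.Gamma (2+b),
    mul_pos (by nlinarith) hΓ2, ?_⟩
  intro n hn
  have hn2 : 2 ≤ n - 2 := by omega
  have hΓn : 0 < Real.Gamma ((↑(n-2):ℝ) + b) := by
    apply Real.Gamma_pos_of_pos
    have : (2:ℝ) ≤ ((n-2:ℕ):ℝ) := by exact_mod_cast hn2
    linarith
  -- pointwise bound by the k = 2 term
  have hQ2 : ∀ k ∈ Finset.Icc 2 (n-2),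
      Real.Gamma ((k:ℝ) + b) * Real.Gamma ((↑(n-k):ℝ) + b) ≤
      Real.Gamma (2 + b) * Real.Gamma ((↑(n-2):ℝ) + b) := by
    intro k hk
    rw [Finset.mem_Icc] at hk
    have h2 := gamma_prod_mono b hb' n 2 le_rfl
    rcases le_or_gt (2*k) n with h | h
    · have := h2 k hk.1 h
      simpa using this
    · have hkn : k ≤ n := by omega
      have hkey := h2 (n-k) (by omega) (by omega)
      rw [Nat.sub_sub_self hkn] at hkey
      calc Real.Gamma ((k:ℝ) + b) * Real.Gamma ((↑(n-k):ℝ) + b)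
          = Real.Gamma ((↑(n-k):ℝ) + b) * Real.Gamma ((k:ℝ) + b) := by ring
        _ ≤ _ := by simpa using hkey
  -- pointwise bound by the k = 4 term (for the middle range)
  have hQ4 : ∀ k ∈ Finset.Icc 4 (n-4),
      Real.Gamma ((k:ℝ) + b) * Real.Gamma ((↑(n-k):ℝ) + b) ≤
      Real.Gamma (4 + b) * Real.Gamma ((↑(n-4):ℝ) + b) := by
    intro k hk
    rw [Finset.mem_Icc] at hk
    have hn8 : 8 ≤ n := by omega
    have h4 := gamma_prod_mono b hb' n 4 (by norm_num)
    rcases le_or_gt (2*k) n with h | h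
    · have := h4 k hk.1 h
      simpa using this
    · have hkn : k ≤ n := by omega
      have hkey := h4 (n-k) (by omega) (by omega)
      rw [Nat.sub_sub_self hkn] at hkey
      calc Real.Gamma ((k:ℝ) + b) * Real.Gamma ((↑(n-k):ℝ) + b)
          = Real.Gamma ((↑(n-k):ℝ) + b) * Real.Gamma ((k:ℝ) + b) := by ring
        _ ≤ _ := by simpa using hkey
  rcases le_or_gt n 7 with h7 | h8
  · -- small n : at most 4 terms, each at most the k = 2 term
    have hsum := Finset.sum_le_card_nsmul (Finset.Icc 2 (n-2))
      (fun k => Real.Gamma ((k:ℝ) + b) * Real.Gamma ((↑(n-k):ℝ) + b))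
      (Real.Gamma (2 + b) * Real.Gamma ((↑(n-2):ℝ) + b)) hQ2
    rw [Nat.card_Icc, show n - 2 + 1 - 2 = n - 3 by omega, nsmul_eq_mul] at hsum
    have hle4 : ((n-3:ℕ):ℝ) ≤ 4 := by exact_mod_cast (show n - 3 ≤ 4 by omega)
    have hc3 : (0:ℝ) ≤ ((n-3:ℕ):ℝ) := by positivity
    nlinarith [hsum, hle4, mul_pos hΓ2 hΓn,
      mul_pos (mul_pos h2b h3b) (mul_pos hΓ2 hΓn)]
  · -- large n
    have h8' : 8 ≤ n := by omega
    have hn8 : (8:ℝ) ≤ (n:ℝ) := by exact_mod_cast h8'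
    have hset : Finset.Icc 2 (n-2)
        = insert 2 (insert 3 (insert (n-3) (insert (n-2) (Finset.Icc 4 (n-4))))) := by
      ext x
      simp only [Finset.mem_Icc, Finset.mem_insert]
      omega
    have h2notin : 2 ∉ insert 3 (insert (n-3) (insert (n-2) (Finset.Icc 4 (n-4)))) := by
      simp only [Finset.mem_insert, Finset.mem_Icc]; omega
    have h3notin : 3 ∉ insert (n-3) (insert (n-2) (Finset.Icc 4 (n-4))) := by
      simp only [Finset.mem_insert, Finset.mem_Icc]; omega
    have h4notin : n-3 ∉ insert (n-2) (Finset.Icc 4 (n-4)) := by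
      simp only [Finset.mem_insert, Finset.mem_Icc]; omega
    have h5notin : n-2 ∉ Finset.Icc 4 (n-4) := by
      simp only [Finset.mem_Icc]; omega
    rw [hset, Finset.sum_insert h2notin, Finset.sum_insert h3notin,
        Finset.sum_insert h4notin, Finset.sum_insert h5notin]
    have b2 := hQ2 2 (by rw [Finset.mem_Icc]; omega)
    have b3 := hQ2 3 (by rw [Finset.mem_Icc]; omega)
    have b4 := hQ2 (n-3) (by rw [Finset.mem_Icc]; omega)
    have b5 := hQ2 (n-2) (by rw [Finset.mem_Icc]; omega)
    have hmid : ∑ k ∈ Finset.Icc 4 (n-4),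
        Real.Gamma ((k:ℝ) + b) * Real.Gamma ((↑(n-k):ℝ) + b)
        ≤ ((n-7:ℕ):ℝ) * (Real.Gamma (4 + b) * Real.Gamma ((↑(n-4):ℝ) + b)) := by
      have := Finset.sum_le_card_nsmul (Finset.Icc 4 (n-4))
        (fun k => Real.Gamma ((k:ℝ) + b) * Real.Gamma ((↑(n-k):ℝ) + b))
        (Real.Gamma (4 + b) * Real.Gamma ((↑(n-4):ℝ) + b)) hQ4
      rwa [Nat.card_Icc, show n - 4 + 1 - 4 = n - 7 by omega, nsmul_eq_mul] at this
    have hcast2 : ((n-2:ℕ):ℝ) = (n:ℝ) - 2 := by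
      rw [Nat.cast_sub (by omega)]; norm_num
    have hcast4 : ((n-4:ℕ):ℝ) = (n:ℝ) - 4 := by
      rw [Nat.cast_sub (by omega)]; norm_num
    have hcast7 : ((n-7:ℕ):ℝ) = (n:ℝ) - 7 := by
      rw [Nat.cast_sub (by omega)]; norm_num
    have hΓ4 : Real.Gamma (4+b) = (3+b)*((2+b)*Real.Gamma (2+b)) := by
      rw [show (4:ℝ)+b = (3+b)+1 by ring, Real.Gamma_add_one (ne_of_gt h3b),
          show (3:ℝ)+b = (2+b)+1 by ring, Real.Gamma_add_one (ne_of_gt h2b)]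
    have hB3 : (0:ℝ) < (n:ℝ) - 3 + b := by linarith
    have hB4 : (0:ℝ) < (n:ℝ) - 4 + b := by linarith
    have hΓm : 0 < Real.Gamma ((n:ℝ) - 4 + b) := Real.Gamma_pos_of_pos hB4
    have hΓn2 : Real.Gamma ((↑(n-2):ℝ) + b)
        = ((n:ℝ)-3+b)*(((n:ℝ)-4+b)*Real.Gamma ((n:ℝ)-4+b)) := by
      rw [hcast2, show (n:ℝ)-2+b = ((n:ℝ)-3+b)+1 by ring,
        Real.Gamma_add_one (ne_of_gt hB3),
        show (n:ℝ)-3+b = ((n:ℝ)-4+b)+1 by ring,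
        Real.Gamma_add_one (ne_of_gt hB4)]
    have hq : (n:ℝ) - 7 ≤ 2*((n:ℝ)-3+b)*((n:ℝ)-4+b) := by
      nlinarith [mul_nonneg (by linarith : (0:ℝ) ≤ (n:ℝ)-8) (by linarith : (0:ℝ) ≤ b+2),
        sq_nonneg ((n:ℝ)-8), sq_nonneg (b+2)]
    have hmid2 : ((n-7:ℕ):ℝ) * (Real.Gamma (4 + b) * Real.Gamma ((↑(n-4):ℝ) + b)) ≤
        2*(2+b)*(3+b) * (Real.Gamma (2+b) * Real.Gamma ((↑(n-2):ℝ) + b)) := by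
      rw [hΓ4, hΓn2, hcast4, hcast7]
      have h' := mul_le_mul_of_nonneg_right hq
        (le_of_lt (mul_pos (mul_pos h2b h3b) (mul_pos hΓ2 hΓm)))
      nlinarith [h']
    have hfin : ∑ k ∈ Finset.Icc 4 (n-4),
        Real.Gamma ((k:ℝ) + b) * Real.Gamma ((↑(n-k):ℝ) + b)
        ≤ 2*(2+b)*(3+b) * (Real.Gamma (2+b) * Real.Gamma ((↑(n-2):ℝ) + b)) :=
      hmid.trans hmid2
    calc Real.Gamma ((2:ℕ) + b) * Real.Gamma ((↑(n-2):ℝ) + b)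
          + (Real.Gamma ((3:ℕ) + b) * Real.Gamma ((↑(n-3):ℝ) + b)
          + (Real.Gamma ((↑(n-3):ℕ) + b) * Real.Gamma ((↑(n-(n-3)):ℝ) + b)
          + (Real.Gamma ((↑(n-2):ℕ) + b) * Real.Gamma ((↑(n-(n-2)):ℝ) + b)
          + ∑ k ∈ Finset.Icc 4 (n-4),
              Real.Gamma ((k:ℝ) + b) * Real.Gamma ((↑(n-k):ℝ) + b))))
        ≤ Real.Gamma (2 + b) * Real.Gamma ((↑(n-2):ℝ) + b)
          + (Real.Gamma (2 + b) * Real.Gamma ((↑(n-2):ℝ) + b)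
          + (Real.Gamma (2 + b) * Real.Gamma ((↑(n-2):ℝ) + b)
          + (Real.Gamma (2 + b) * Real.Gamma ((↑(n-2):ℝ) + b)
          + 2*(2+b)*(3+b) * (Real.Gamma (2+b) * Real.Gamma ((↑(n-2):ℝ) + b))))) := by
          refine add_le_add ?_ (add_le_add ?_ (add_le_add ?_ (add_le_add ?_ hfin)))
          · simpa using b2
          · simpa using b3
          · exact b4
          · exact b5
      _ = (4 + 2*(2+b)*(3+b)) * Real.Gamma (2+b) * Real.Gamma ((↑(n-2):ℝ) + b) := by
          ring
end

section
/- Let $b > -2$, $\rho > 0$, and set $\Gamma_n := \Gamma(n+b)$ for $n \ge 2$. Then there exists $\bar C = \bar C(b,\rho) > 0$ such that for all $k \ge 4$: $\sum_{j=2}^{k-2} \rho^{j-k+2}\, \Gamma_j \le \bar C\, \Gamma_{k-2}$. -/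
private noncomputable def Tsum (b ρ : ℝ) (k : ℕ) : ℝ :=
  ∑ j ∈ Finset.Icc 2 (k - 2), ρ ^ ((j : ℤ) - k + 2) * Real.Gamma (j + b)

private lemma Trec (b ρ : ℝ) (hρ : ρ ≠ 0) (k : ℕ) (hk : 4 ≤ k) :
    Tsum b ρ (k + 1) = ρ⁻¹ * Tsum b ρ k + Real.Gamma ((k : ℝ) - 1 + b) := by
  obtain ⟨m, rfl⟩ : ∃ m, k = m + 4 := ⟨k - 4, by omega⟩
  unfold Tsum
  have h1 : (m + 4 + 1 : ℕ) - 2 = (m + 2) + 1 := by omega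
  have h2 : (m + 4 : ℕ) - 2 = m + 2 := by omega
  rw [h1, h2, Finset.sum_Icc_succ_top (by omega), Finset.mul_sum]
  congr 1
  · apply Finset.sum_congr rfl
    intro j hj
    have hE : ((j : ℤ) - (m + 4 + 1 : ℕ) + 2) = (-1) + ((j : ℤ) - (m + 4 : ℕ) + 2) := by
      push_cast; ring
    rw [hE, zpow_add₀ hρ, zpow_neg_one]
    ring
  · have hE : (((m + 2 + 1 : ℕ) : ℤ) - ((m + 4 + 1 : ℕ) : ℤ) + 2) = 0 := by push_cast; ring
    rw [hE, zpow_zero, one_mul]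
    congr 1
    push_cast; ring

private lemma Tnonneg (b ρ : ℝ) (hb : b > -2) (hρ : ρ > 0) (k : ℕ) : 0 ≤ Tsum b ρ k := by
  unfold Tsum
  apply Finset.sum_nonneg
  intro j hj
  have hj2 : 2 ≤ j := (Finset.mem_Icc.mp hj).1
  have hjb : (0 : ℝ) < (j : ℝ) + b := by
    have : (2 : ℝ) ≤ (j : ℝ) := by exact_mod_cast hj2
    linarith
  have := Real.Gamma_pos_of_pos hjb
  positivity

theorem stmt_16 (b ρ : ℝ) (hb : b > -2) (hρ : ρ > 0) :
    ∃ C : ℝ, C > 0 ∧ ∀ k : ℕ, 4 ≤ k →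
      ∑ j ∈ Finset.Icc 2 (k - 2), ρ ^ ((j : ℤ) - k + 2) * Real.Gamma (j + b) ≤
        C * Real.Gamma ((k - 2 : ℕ) + b) := by
  have hρ' : ρ ≠ 0 := ne_of_gt hρ
  have hGpos : ∀ k : ℕ, 4 ≤ k → 0 < Real.Gamma ((k : ℝ) - 2 + b) := by
    intro k hk
    apply Real.Gamma_pos_of_pos
    have : (4 : ℝ) ≤ (k : ℝ) := by exact_mod_cast hk
    linarith
  set N : ℕ := max 4 ⌈2 / ρ + 2 - b⌉₊ with hN
  have hN4 : 4 ≤ N := le_max_left _ _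
  have hNbig : ∀ k : ℕ, N ≤ k → 2 ≤ ρ * ((k : ℝ) - 2 + b) := by
    intro k hk
    have h1 : (2 / ρ + 2 - b : ℝ) ≤ (⌈2 / ρ + 2 - b⌉₊ : ℝ) := Nat.le_ceil _
    have h2 : (⌈2 / ρ + 2 - b⌉₊ : ℝ) ≤ (N : ℝ) := by
      exact_mod_cast le_max_right 4 ⌈2 / ρ + 2 - b⌉₊
    have h3 : (N : ℝ) ≤ (k : ℝ) := by exact_mod_cast hk
    have h4 : 2 / ρ ≤ (k : ℝ) - 2 + b := by linarith
    have h5 : ρ * (2 / ρ) ≤ ρ * ((k : ℝ) - 2 + b) :=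
      mul_le_mul_of_nonneg_left h4 hρ.le
    have : ρ * (2 / ρ) = 2 := by field_simp
    linarith
  set C : ℝ := 2 + ∑ k ∈ Finset.Icc 4 N, Tsum b ρ k / Real.Gamma ((k : ℝ) - 2 + b) with hC
  have hsumnn : ∀ k ∈ Finset.Icc 4 N, 0 ≤ Tsum b ρ k / Real.Gamma ((k : ℝ) - 2 + b) := by
    intro k hk
    have hk4 : 4 ≤ k := (Finset.mem_Icc.mp hk).1
    exact div_nonneg (Tnonneg b ρ hb hρ k) (hGpos k hk4).le
  have hC2 : 2 ≤ C := by
    have := Finset.sum_nonneg hsumnn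
    rw [hC]; linarith
  have hCbound : ∀ k ∈ Finset.Icc 4 N, Tsum b ρ k ≤ C * Real.Gamma ((k : ℝ) - 2 + b) := by
    intro k hk
    have hk4 : 4 ≤ k := (Finset.mem_Icc.mp hk).1
    have hG := hGpos k hk4
    have h1 : Tsum b ρ k / Real.Gamma ((k : ℝ) - 2 + b) ≤ C := by
      have := Finset.single_le_sum hsumnn hk
      rw [hC]; linarith
    calc Tsum b ρ k = Tsum b ρ k / Real.Gamma ((k : ℝ) - 2 + b) * Real.Gamma ((k : ℝ) - 2 + b) := by
          field_simp
      _ ≤ C * Real.Gamma ((k : ℝ) - 2 + b) := mul_le_mul_of_nonneg_right h1 hG.le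
  have key : ∀ k : ℕ, 4 ≤ k → Tsum b ρ k ≤ C * Real.Gamma ((k : ℝ) - 2 + b) := by
    intro k hk
    induction k, hk using Nat.le_induction with
    | base => exact hCbound 4 (Finset.mem_Icc.mpr ⟨le_refl 4, hN4⟩)
    | succ n hn ih =>
      have hcast : ((n + 1 : ℕ) : ℝ) - 2 + b = (n : ℝ) - 1 + b := by push_cast; ring
      rw [hcast]
      by_cases h : n + 1 ≤ N
      · have := hCbound (n + 1) (Finset.mem_Icc.mpr ⟨by omega, h⟩)
        rwa [hcast] at this
      · have hNn : N ≤ n := by omega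
        rw [Trec b ρ hρ' n hn]
        have hx : (0 : ℝ) < (n : ℝ) - 2 + b := by
          have : (4 : ℝ) ≤ (n : ℝ) := by exact_mod_cast hn
          linarith
        have hG1 : Real.Gamma ((n : ℝ) - 1 + b) = ((n : ℝ) - 2 + b) * Real.Gamma ((n : ℝ) - 2 + b) := by
          have h' : (n : ℝ) - 1 + b = ((n : ℝ) - 2 + b) + 1 := by ring
          rw [h', Real.Gamma_add_one hx.ne']
        have hρinv : (0 : ℝ) < ρ⁻¹ := inv_pos.mpr hρ
        have hGn : 0 < Real.Gamma ((n : ℝ) - 2 + b) := hGpos n hn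
        have hbig := hNbig n hNn
        have step1 : ρ⁻¹ * Tsum b ρ n ≤ ρ⁻¹ * (C * Real.Gamma ((n : ℝ) - 2 + b)) :=
          mul_le_mul_of_nonneg_left ih hρinv.le
        have step2 : ρ⁻¹ * (C * Real.Gamma ((n : ℝ) - 2 + b)) ≤
            (C - 1) * Real.Gamma ((n : ℝ) - 1 + b) := by
          rw [hG1]
          have hkey : ρ⁻¹ * C ≤ (C - 1) * ((n : ℝ) - 2 + b) := by
            have hinv : ρ * ρ⁻¹ = 1 := mul_inv_cancel₀ hρ'
            have h6 : C ≤ (C - 1) * (ρ * ((n : ℝ) - 2 + b)) := by nlinarith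
            have h7 := mul_le_mul_of_nonneg_left h6 hρinv.le
            calc ρ⁻¹ * C ≤ ρ⁻¹ * ((C - 1) * (ρ * ((n : ℝ) - 2 + b))) := h7
              _ = (C - 1) * ((n : ℝ) - 2 + b) * (ρ * ρ⁻¹) := by ring
              _ = (C - 1) * ((n : ℝ) - 2 + b) := by rw [hinv, mul_one]
          calc ρ⁻¹ * (C * Real.Gamma ((n : ℝ) - 2 + b))
              = (ρ⁻¹ * C) * Real.Gamma ((n : ℝ) - 2 + b) := by ring
            _ ≤ ((C - 1) * ((n : ℝ) - 2 + b)) * Real.Gamma ((n : ℝ) - 2 + b) :=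
                mul_le_mul_of_nonneg_right hkey hGn.le
            _ = (C - 1) * (((n : ℝ) - 2 + b) * Real.Gamma ((n : ℝ) - 2 + b)) := by ring
        linarith
  refine ⟨C, by linarith, fun k hk => ?_⟩
  have h1 := key k hk
  have h2 : (((k - 2 : ℕ) : ℝ)) = (k : ℝ) - 2 := by
    have : 2 ≤ k := by omega
    push_cast [Nat.cast_sub this]; ring
  rw [h2]
  exact h1
end

section
/- Let $b > -2$, $\xi > 0$, and set $\Gamma_n := \Gamma(n+b)$ for $n \ge 2$. Then there exists $\bar C = \bar C(b,\xi) > 0$ such that for all $k \ge 4$: $\sum_{l=2}^{\lfloor k/2 \rfloor} \xi^{l-2}\, \Gamma_{k-2(l-1)} \le \bar C\, \Gamma_{k-2}$. -/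
/-!
Put `c := min (b + 2) 1`. Every argument `x = k - 2l + 2 + b` of `Γ` in the sum satisfies
`x ≥ b + 2 ≥ c`, and `x + i ≥ c (i + 1)` for all `i`, so the functional equation gives
`Γ(x + 2m) ≥ c^{2m} (2m)! Γ(x) ≥ c^{2m} m! Γ(x)`. With `m = l - 2` and `x + 2m = k - 2 + b`
the `l`-th summand is at most `(ξ / c²)^m / m! · Γ(k - 2 + b)`, and these coefficients sum to at
most `exp (ξ / c²)`.
-/

open Nat Real Finset

namespace Real

theorem pow_mul_factorial_mul_Gamma_le {c x : ℝ} (hc : 0 < c) (hc1 : c ≤ 1) (hcx : c ≤ x) :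
    ∀ n : ℕ, c ^ n * n ! * Gamma x ≤ Gamma (x + n)
  | 0 => by simp
  | n + 1 => by
    have hx : 0 < x := hc.trans_le hcx
    have hstep : c * (n + 1) ≤ x + n := by nlinarith
    calc c ^ (n + 1) * (n + 1)! * Gamma x
        = c * (n + 1) * (c ^ n * n ! * Gamma x) := by push_cast [factorial_succ]; ring
      _ ≤ (x + n) * Gamma (x + n) := by
        have hΓ : 0 ≤ c ^ n * n ! * Gamma x := by
          have := Gamma_pos_of_pos hx
          positivity
        exact mul_le_mul hstep (pow_mul_factorial_mul_Gamma_le hc hc1 hcx n) hΓ (by positivity)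
      _ = Gamma (x + ↑(n + 1)) := by
        rw [Nat.cast_succ, ← add_assoc, Gamma_add_one (by positivity)]

theorem pow_mul_Gamma_le_Gamma_add_two_mul {c x ξ : ℝ} (hc : 0 < c) (hc1 : c ≤ 1) (hcx : c ≤ x)
    (hξ : 0 ≤ ξ) (m : ℕ) :
    ξ ^ m * Gamma x ≤ (ξ / c ^ 2) ^ m / m ! * Gamma (x + 2 * m) := by
  have hΓ : 0 ≤ Gamma x := Gamma_nonneg_of_nonneg (hc.le.trans hcx)
  have hfac : (m ! : ℝ) ≤ (2 * m)! := by exact_mod_cast factorial_le (by omega)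
  have key : c ^ (2 * m) * m ! * Gamma x ≤ Gamma (x + 2 * m) := by
    have := pow_mul_factorial_mul_Gamma_le hc hc1 hcx (2 * m)
    push_cast at this
    refine le_trans ?_ this
    gcongr
  calc ξ ^ m * Gamma x = (ξ / c ^ 2) ^ m / m ! * (c ^ (2 * m) * m ! * Gamma x) := by
        rw [div_pow, ← pow_mul, mul_comm 2 m]
        field_simp
    _ ≤ (ξ / c ^ 2) ^ m / m ! * Gamma (x + 2 * m) := by gcongr

end Real

theorem stmt_17 (b ξ : ℝ) (hb : b > -2) (hξ : ξ > 0) :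
    ∃ C : ℝ, C > 0 ∧ ∀ k : ℕ, 4 ≤ k →
      ∑ l ∈ Finset.Icc 2 (k / 2), ξ ^ (l - 2) * Real.Gamma ((k : ℝ) - 2 * (l - 1) + b) ≤
        C * Real.Gamma ((k - 2 : ℕ) + b) := by
  set c := min (b + 2) 1
  have hc : 0 < c := lt_min (by linarith) one_pos
  refine ⟨exp (ξ / c ^ 2), exp_pos _, fun k hk => ?_⟩
  have hy : ((k - 2 : ℕ) : ℝ) + b = (k : ℝ) - 2 + b := by
    push_cast [Nat.cast_sub (by omega : 2 ≤ k)]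
    ring
  rw [hy, ← Ico_add_one_right_eq_Icc, sum_Ico_eq_sum_range]
  calc ∑ m ∈ range (k / 2 + 1 - 2), ξ ^ (2 + m - 2) * Gamma (k - 2 * (↑(2 + m) - 1) + b)
      ≤ ∑ m ∈ range (k / 2 + 1 - 2), (ξ / c ^ 2) ^ m / m ! * Gamma (k - 2 + b) := by
        refine sum_le_sum fun m hm => ?_
        have hmk : 2 * (2 + m) ≤ k := by rw [mem_range] at hm; omega
        have hcx : c ≤ k - 2 * (↑(2 + m) - 1) + b := by
          have : (2 * (2 + m) : ℝ) ≤ k := by exact_mod_cast hmk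
          refine (min_le_left _ _).trans ?_
          push_cast; linarith
        rw [Nat.add_sub_cancel_left]
        have h := pow_mul_Gamma_le_Gamma_add_two_mul hc (min_le_right _ _) hcx hξ.le m
        rwa [show (k : ℝ) - 2 * (↑(2 + m) - 1) + b + 2 * m = k - 2 + b by push_cast; ring] at h
    _ = (∑ m ∈ range (k / 2 + 1 - 2), (ξ / c ^ 2) ^ m / m !) * Gamma (k - 2 + b) := by
        rw [sum_mul]
    _ ≤ exp (ξ / c ^ 2) * Gamma (k - 2 + b) := by
        have hk4 : (4 : ℝ) ≤ k := by exact_mod_cast hk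
        exact mul_le_mul_of_nonneg_right (sum_le_exp_of_nonneg (by positivity) _)
          (Gamma_pos_of_pos (by linarith)).le
end

section
/- Let $a \ge 2$, $C > 0$, and let $(\phi_n)_{n \ge 2}$ satisfy $|\phi_n| \le C\, \Gamma(n+1+a)$ for all $n \ge 2$. For $l \ge 2$ define $(\phi^l)_n$ as the $l$-fold Cauchy product coefficients: $(\phi^2)_n = \sum_{k=2}^{n-2}\phi_k\phi_{n-k}$ and $(\phi^l)_n = \sum_{k=2(l-1)}^{n-2} (\phi^{l-1})_k \phi_{n-k}$. Then, with $\bar C$ the constant from the convolution estimate $\sum_{k=2}^{n-2}\Gamma(k+1+a)\Gamma(n-k+1+a) \le \bar C\,\Gamma(n-1+a)$, one has $|(\phi^l)_n| \le C^l\, \bar C^{\,l-1}\, \Gamma(n - 2(l-1) + 1 + a)$ for all $n \ge 2l$. -/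
/-!
By induction on `l`: the triangle inequality bounds `(φ^(l+1))_n` by `C^(l+1) C̄^(l-1)` times the
convolution sum of the Gamma weights `Γ(k + 1 + a)`, once the sum is reindexed by the shift
`2(l - 1)` carried by the inductive bound; the convolution estimate turns this sum into one more
factor `C̄` and a Gamma factor whose argument has dropped by two.
-/

open Finset

section Convolution

variable {E : Type*} [NormedRing E]

theorem norm_sum_Icc_mul_le_of_weight {f g : ℕ → E} {w : ℕ → ℝ} {A B : ℝ}
    (hf : ∀ k, 2 ≤ k → ‖f k‖ ≤ A * w k) (hg : ∀ k, 2 ≤ k → ‖g k‖ ≤ B * w k) (n : ℕ) :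
    ‖∑ k ∈ Icc 2 (n - 2), f k * g (n - k)‖ ≤
      A * B * ∑ k ∈ Icc 2 (n - 2), w k * w (n - k) := by
  rw [mul_sum]
  refine (norm_sum_le _ _).trans (sum_le_sum fun k hk => ?_)
  obtain ⟨hk2, hkn⟩ := mem_Icc.mp hk
  calc ‖f k * g (n - k)‖ ≤ ‖f k‖ * ‖g (n - k)‖ := norm_mul_le _ _
    _ ≤ A * w k * (B * w (n - k)) :=
        mul_le_mul (hf k hk2) (hg _ (by omega)) (norm_nonneg _)
          ((norm_nonneg _).trans (hf k hk2))
    _ = A * B * (w k * w (n - k)) := by ring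

theorem sum_Icc_shift {M : Type*} [AddCommMonoid M] (f : ℕ → M) {s n : ℕ} (hn : s + 2 ≤ n) :
    ∑ k ∈ Icc (s + 2) (n - 2), f k = ∑ j ∈ Icc 2 (n - s - 2), f (j + s) := by
  have hIcc : Icc (s + 2) (n - 2) = (Icc 2 (n - s - 2)).map (addRightEmbedding s) := by
    rw [map_add_right_Icc]
    congr 1 <;> omega
  rw [hIcc, sum_map]
  rfl

theorem norm_sum_Icc_shift_mul_le {f g : ℕ → E} {w v : ℕ → ℝ} {A B Cbar : ℝ}
    (hA : 0 ≤ A) (hB : 0 ≤ B)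
    (hconv : ∀ m, 4 ≤ m → ∑ k ∈ Icc 2 (m - 2), w k * w (m - k) ≤ Cbar * v m) (s : ℕ)
    (hf : ∀ k, 2 ≤ k → ‖f (k + s)‖ ≤ A * w k) (hg : ∀ k, 2 ≤ k → ‖g k‖ ≤ B * w k)
    {n : ℕ} (hn : s + 4 ≤ n) :
    ‖∑ k ∈ Icc (s + 2) (n - 2), f k * g (n - k)‖ ≤ A * B * Cbar * v (n - s) := by
  have hreindex : ∑ k ∈ Icc (s + 2) (n - 2), f k * g (n - k) =
      ∑ j ∈ Icc 2 (n - s - 2), f (j + s) * g (n - s - j) := by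
    rw [sum_Icc_shift _ (by omega)]
    exact sum_congr rfl fun j _ => by congr 2; omega
  rw [hreindex, mul_assoc]
  exact (norm_sum_Icc_mul_le_of_weight hf hg _).trans
    (mul_le_mul_of_nonneg_left (hconv _ (by omega)) (mul_nonneg hA hB))

end Convolution

theorem stmt_18_general (a C Cbar : ℝ) (hC : C > 0) (hCbar : Cbar > 0)
    (φ : ℕ → ℂ)
    (hφ : ∀ n : ℕ, 2 ≤ n → ‖φ n‖ ≤ C * Real.Gamma (n + 1 + a))
    (hconv : ∀ n : ℕ, 4 ≤ n →
      ∑ k ∈ Finset.Icc 2 (n - 2),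
        Real.Gamma (k + 1 + a) * Real.Gamma ((n - k : ℕ) + 1 + a) ≤
          Cbar * Real.Gamma ((n : ℝ) - 1 + a))
    (Φ : ℕ → ℕ → ℂ)
    (hΦ2 : ∀ n : ℕ, Φ 2 n = ∑ k ∈ Finset.Icc 2 (n - 2), φ k * φ (n - k))
    (hΦ : ∀ l : ℕ, 3 ≤ l → ∀ n : ℕ,
      Φ l n = ∑ k ∈ Finset.Icc (2 * (l - 1)) (n - 2), Φ (l - 1) k * φ (n - k)) :
    ∀ l : ℕ, 2 ≤ l → ∀ n : ℕ, 2 * l ≤ n →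
      ‖Φ l n‖ ≤
        C ^ l * Cbar ^ (l - 1) * Real.Gamma ((n : ℝ) - 2 * ((l : ℝ) - 1) + 1 + a) := by
  refine Nat.le_induction (fun n hn => ?_) (fun l hl IH n hn => ?_)
  · have h := norm_sum_Icc_shift_mul_le hC.le hC.le hconv 0 (by simpa using hφ) hφ
      (n := n) (by omega)
    rw [hΦ2]
    convert h using 3 <;> norm_num <;> ring
  · have hf : ∀ k, 2 ≤ k → ‖Φ l (k + 2 * (l - 1))‖ ≤ C ^ l * Cbar ^ (l - 1) *
        Real.Gamma (k + 1 + a) := fun k hk => by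
      convert IH (k + 2 * (l - 1)) (by omega) using 3
      push_cast [Nat.cast_sub (by omega : 1 ≤ l)]
      ring
    have h := norm_sum_Icc_shift_mul_le (by positivity) hC.le hconv _ hf hφ
      (by omega : 2 * (l - 1) + 4 ≤ n)
    rw [hΦ (l + 1) (by omega), Nat.add_sub_cancel, show 2 * l = 2 * (l - 1) + 2 by omega]
    convert h using 2
    · rw [pow_succ, show l = l - 1 + 1 by omega, pow_succ]
      simp only [Nat.add_sub_cancel]
      ring
    · push_cast [Nat.cast_sub (by omega : 2 * (l - 1) ≤ n), Nat.cast_sub (by omega : 1 ≤ l)]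
      ring_nf

theorem stmt_18 (a C Cbar : ℝ) (ha : a ≥ 2) (hC : C > 0) (hCbar : Cbar > 0)
    (φ : ℕ → ℂ)
    (hφ : ∀ n : ℕ, 2 ≤ n → ‖φ n‖ ≤ C * Real.Gamma (n + 1 + a))
    (hconv : ∀ n : ℕ, 4 ≤ n →
      ∑ k ∈ Finset.Icc 2 (n - 2),
        Real.Gamma (k + 1 + a) * Real.Gamma ((n - k : ℕ) + 1 + a) ≤
          Cbar * Real.Gamma ((n : ℝ) - 1 + a))
    (Φ : ℕ → ℕ → ℂ)
    (hΦ2 : ∀ n : ℕ, Φ 2 n = ∑ k ∈ Finset.Icc 2 (n - 2), φ k * φ (n - k))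
    (hΦ : ∀ l : ℕ, 3 ≤ l → ∀ n : ℕ,
      Φ l n = ∑ k ∈ Finset.Icc (2 * (l - 1)) (n - 2), Φ (l - 1) k * φ (n - k)) :
    ∀ l : ℕ, 2 ≤ l → ∀ n : ℕ, 2 * l ≤ n →
      ‖Φ l n‖ ≤
        C ^ l * Cbar ^ (l - 1) * Real.Gamma ((n : ℝ) - 2 * ((l : ℝ) - 1) + 1 + a) :=
  stmt_18_general a C Cbar hC hCbar φ hφ hconv Φ hΦ2 hΦ
end

section
/- Let $b \in \mathbb{R}$ and set $a = -b - 2$. Define the sequence $\phi_n = b^{n-1}$ for $n \ge 2$. Then $(\phi_n)$ satisfies the Riccati recursion $\phi_n + (n-1+a)\phi_{n-1} = b\,\delta_{n,2} + \sum_{i=2}^{n-2}\phi_i\phi_{n-i}$ for all $n \ge 3$ (with $\phi_2 = b$ for $n=2$); equivalently, $y(x) = \frac{bx^2}{1-bx}$ is an analytic solution of $x^2 y' + (1+ax)y = bx^2 + y^2$. -/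
theorem stmt_19 (b : ℝ) (a : ℝ) (ha : a = -b - 2)
    (φ : ℕ → ℝ) (hφ : ∀ n : ℕ, 2 ≤ n → φ n = b ^ (n - 1)) :
    φ 2 = b ∧
    ∀ n : ℕ, 3 ≤ n →
      φ n + ((n : ℝ) - 1 + a) * φ (n - 1) =
        (if n = 2 then b else 0) + ∑ i ∈ Finset.Icc 2 (n - 2), φ i * φ (n - i) := by
  constructor
  · simpa using hφ 2 le_rfl
  · intro n hn
    have h1 : φ n = b * b ^ (n - 2) := by
      rw [hφ n (by omega)]
      rw [show n - 1 = (n - 2) + 1 by omega, pow_succ]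
      ring
    have h2 : φ (n - 1) = b ^ (n - 2) := by
      rw [hφ (n - 1) (by omega)]
      congr 1 <;> omega
    have hsum : ∑ i ∈ Finset.Icc 2 (n - 2), φ i * φ (n - i) =
        ((n - 3 : ℕ) : ℝ) * b ^ (n - 2) := by
      have hterm : ∀ i ∈ Finset.Icc 2 (n - 2), φ i * φ (n - i) = b ^ (n - 2) := by
        intro i hi
        simp only [Finset.mem_Icc] at hi
        rw [hφ i (by omega), hφ (n - i) (by omega), ← pow_add]
        congr 1
        omega
      rw [Finset.sum_congr rfl hterm, Finset.sum_const, Nat.card_Icc, nsmul_eq_mul]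
      congr 2 <;> omega
    rw [h1, h2, hsum, ha, if_neg (by omega)]
    have hc : ((n - 3 : ℕ) : ℝ) = (n : ℝ) - 3 := by
      have : 3 ≤ n := hn
      push_cast [this]
      ring
    rw [hc]
    ring
end
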